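/- Let L : ℝⁿ × ℝⁿ → ℝ be smooth with invertible velocity Hessian everywhere (regular Lagrangian). Then the unique vector field Γ on TQ solving i(Γ)ω_L = dE_L is a second-order differential equation: S(Γ) = Δ, i.e., the dq^A-components of Γ equal v^A. -/

import Mathlib

open scoped BigOperators

noncomputable section

/-- The vertical endomorphism S of T(TQ) for TQ = ℝⁿ × ℝⁿ : (a,b) ↦ (0,a). -/
def vertEndo (n : ℕ) :
    ((Fin n → ℝ) × (Fin n → ℝ)) →L[ℝ] ((Fin n → ℝ) × (Fin n → ℝ)) :=
  ContinuousLinearMap.prod 0 (ContinuousLinearMap.fst ℝ (Fin n → ℝ) (Fin n → ℝ))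

/-- The Lagrangian 1-form θ_L = dL ∘ S. -/
def thetaL (n : ℕ) (L : ((Fin n → ℝ) × (Fin n → ℝ)) → ℝ)
    (x : (Fin n → ℝ) × (Fin n → ℝ)) :
    ((Fin n → ℝ) × (Fin n → ℝ)) →L[ℝ] ℝ :=
  (fderiv ℝ L x).comp (vertEndo n)

/-- The Lagrangian 2-form ω_L = −d(dL ∘ S), evaluated on tangent vectors u, w. -/
def omegaL (n : ℕ) (L : ((Fin n → ℝ) × (Fin n → ℝ)) → ℝ)
    (x u w : (Fin n → ℝ) × (Fin n → ℝ)) : ℝ :=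
  fderiv ℝ (thetaL n L) x w u - fderiv ℝ (thetaL n L) x u w

/-- The Lagrangian energy E_L = Δ(L) − L. -/
def energyL (n : ℕ) (L : ((Fin n → ℝ) × (Fin n → ℝ)) → ℝ)
    (x : (Fin n → ℝ) × (Fin n → ℝ)) : ℝ :=
  fderiv ℝ L x (0, x.2) - L x

/-- Abbreviation for the tangent space TQ = ℝⁿ × ℝⁿ. -/
abbrev EE (n : ℕ) := (Fin n → ℝ) × (Fin n → ℝ)

/-- The derivative of θ_L: D(θ_L)ₓ w u = D²Lₓ w (0, u₁). -/
lemma fderiv_thetaL {n : ℕ} {L : EE n → ℝ} (hL : ContDiff ℝ (⊤ : ℕ∞) L) (x w u : EE n) :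
    fderiv ℝ (thetaL n L) x w u = fderiv ℝ (fderiv ℝ L) x w (0, u.1) := by
  set Φ : (EE n →L[ℝ] ℝ) →L[ℝ] (EE n →L[ℝ] ℝ) :=
    (ContinuousLinearMap.compL ℝ (EE n) (EE n) ℝ).flip (vertEndo n) with hΦ
  have h1 : thetaL n L = fun x => Φ (fderiv ℝ L x) := rfl
  have h2 : HasFDerivAt (fun x => Φ (fderiv ℝ L x))
      (Φ.comp (fderiv ℝ (fderiv ℝ L) x)) x :=
    Φ.hasFDerivAt.comp x
      (((hL.fderiv_right (m := 1) (WithTop.coe_le_coe.mpr le_top)).differentiable one_ne_zero x).hasFDerivAt)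
  rw [h1, h2.fderiv]
  rfl

/-- The derivative of the energy E_L. -/
lemma fderiv_energyL {n : ℕ} {L : EE n → ℝ} (hL : ContDiff ℝ (⊤ : ℕ∞) L) (x w : EE n) :
    fderiv ℝ (energyL n L) x w
      = fderiv ℝ (fderiv ℝ L) x w (0, x.2) + fderiv ℝ L x (0, w.2)
        - fderiv ℝ L x w := by
  set g : EE n →L[ℝ] EE n :=
    ContinuousLinearMap.prod 0 (ContinuousLinearMap.snd ℝ (Fin n → ℝ) (Fin n → ℝ)) with hg
  have hgx : ∀ y : EE n, g y = (0, y.2) := fun y => rfl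
  have hc : HasFDerivAt (fderiv ℝ L) (fderiv ℝ (fderiv ℝ L) x) x :=
    ((hL.fderiv_right (m := 1) (WithTop.coe_le_coe.mpr le_top)).differentiable one_ne_zero x).hasFDerivAt
  have hu : HasFDerivAt (fun y : EE n => (0, y.2) : EE n → EE n) g x := g.hasFDerivAt
  have h1 : HasFDerivAt (fun y : EE n => fderiv ℝ L y (0, y.2))
      ((fderiv ℝ L x).comp g + (fderiv ℝ (fderiv ℝ L) x).flip ((0, x.2) : EE n)) x := by
    have := hc.clm_apply hu
    simpa using this
  have h2 : HasFDerivAt (energyL n L)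
      ((fderiv ℝ L x).comp g + (fderiv ℝ (fderiv ℝ L) x).flip ((0, x.2) : EE n)
        - fderiv ℝ L x) x :=
    h1.sub (hL.differentiable (by simp) x).hasFDerivAt
  rw [h2.fderiv]
  simp [ContinuousLinearMap.flip_apply, hgx]
  ring

/-- Entries of the velocity Hessian as second derivatives. -/
lemma hessian_entry {n : ℕ} {L : EE n → ℝ} (hL : ContDiff ℝ (⊤ : ℕ∞) L) (x w m : EE n) :
    fderiv ℝ (fun y => fderiv ℝ L y m) x w = fderiv ℝ (fderiv ℝ L) x w m := by
  have hc : HasFDerivAt (fderiv ℝ L) (fderiv ℝ (fderiv ℝ L) x) x :=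
    ((hL.fderiv_right (m := 1) (WithTop.coe_le_coe.mpr le_top)).differentiable one_ne_zero x).hasFDerivAt
  have h : HasFDerivAt (fun y => fderiv ℝ L y m)
      ((ContinuousLinearMap.apply ℝ ℝ m).comp (fderiv ℝ (fderiv ℝ L) x)) x :=
    (ContinuousLinearMap.apply ℝ ℝ m).hasFDerivAt.comp x hc
  rw [h.fderiv]; rfl

private theorem aux_sode (n : ℕ)
    (L : ((Fin n → ℝ) × (Fin n → ℝ)) → ℝ) (hL : ContDiff ℝ (⊤ : ℕ∞) L)
    (hreg : ∀ x : (Fin n → ℝ) × (Fin n → ℝ),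
      (Matrix.of fun A B : Fin n =>
        fderiv ℝ (fun y => fderiv ℝ L y (0, Pi.single B 1)) x
          (0, Pi.single A 1)).det ≠ 0)
    (Γ : ((Fin n → ℝ) × (Fin n → ℝ)) → (Fin n → ℝ) × (Fin n → ℝ))
    (hΓ : ∀ x w, (fderiv ℝ (thetaL n L) x w (Γ x) - fderiv ℝ (thetaL n L) x (Γ x) w) = fderiv ℝ (energyL n L) x w) :
    ∀ x, (Γ x).1 = x.2 := by
  intro x
  set f'' := fderiv ℝ (fderiv ℝ L) x with hf''def
  -- key identity, obtained by evaluating the dynamical equation on vertical vectors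
  have key : ∀ w2 : Fin n → ℝ,
      f'' (0, w2) ((0, (Γ x).1) : EE n) = f'' (0, w2) ((0, x.2) : EE n) := by
    intro w2
    have h := hΓ x (0, w2)
    rw [fderiv_thetaL hL, fderiv_thetaL hL, fderiv_energyL hL] at h
    simpa [Prod.mk_zero_zero] using h
  set c : Fin n → ℝ := (Γ x).1 - x.2 with hc
  have hzero : ∀ w2 : Fin n → ℝ, f'' ((0, w2) : EE n) ((0, c) : EE n) = 0 := by
    intro w2
    have : ((0, c) : EE n) = ((0, (Γ x).1) : EE n) - ((0, x.2) : EE n) := by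
      simp [hc, Prod.ext_iff]
    rw [this, map_sub, key w2, sub_self]
  have hsmul : ∀ (t : ℝ) (p : Fin n → ℝ),
      ((0, t • p) : EE n) = t • ((0, p) : EE n) := by
    intro t p; simp [Prod.ext_iff]
  have hdecomp : ((0, c) : EE n) = ∑ B : Fin n, c B • ((0, Pi.single B 1) : EE n) := by
    refine Prod.ext ?_ ?_
    · rw [Prod.fst_sum]; simp
    · rw [Prod.snd_sum]
      simp [Pi.single_apply, funext_iff, Finset.sum_apply]
  have hmv : (Matrix.of fun A B : Fin n =>
        fderiv ℝ (fun y => fderiv ℝ L y (0, Pi.single B 1)) x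
          (0, Pi.single A 1)).mulVec c = 0 := by
    funext A
    have : f'' ((0, Pi.single A 1) : EE n) ((0, c) : EE n)
        = ∑ B : Fin n, c B * f'' ((0, Pi.single A 1) : EE n) ((0, Pi.single B 1) : EE n) := by
      rw [hdecomp, map_sum]
      exact Finset.sum_congr rfl fun B _ => by rw [map_smul, smul_eq_mul]
    simp only [Matrix.mulVec, dotProduct, Matrix.of_apply, Pi.zero_apply]
    calc ∑ B : Fin n, fderiv ℝ (fun y => fderiv ℝ L y (0, Pi.single B 1)) x
          (0, Pi.single A 1) * c B
        = ∑ B : Fin n, c B * f'' ((0, Pi.single A 1) : EE n) ((0, Pi.single B 1) : EE n) := by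
          refine Finset.sum_congr rfl fun B _ => ?_
          rw [hessian_entry hL, mul_comm]
      _ = 0 := by rw [← this, hzero]
  have hc0 : c = 0 := Matrix.eq_zero_of_mulVec_eq_zero (hreg x) hmv
  have := sub_eq_zero.mp (by simpa [hc] using hc0)
  exact this

/- STATEMENT 18: for a regular Lagrangian (velocity Hessian everywhere
invertible, i.e. nonzero determinant), any vector field Γ solving
i(Γ)ω_L = dE_L is a second-order differential equation: S(Γ) = Δ, i.e. the
dq-component of Γ at (q,v) is v. -/
theorem regular_lagrangian_dynamics_is_sode (n : ℕ)
    (L : ((Fin n → ℝ) × (Fin n → ℝ)) → ℝ) (hL : ContDiff ℝ (⊤ : ℕ∞) L)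
    (hreg : ∀ x : (Fin n → ℝ) × (Fin n → ℝ),
      (Matrix.of fun A B : Fin n =>
        fderiv ℝ (fun y => fderiv ℝ L y (0, Pi.single B 1)) x
          (0, Pi.single A 1)).det ≠ 0)
    (Γ : ((Fin n → ℝ) × (Fin n → ℝ)) → (Fin n → ℝ) × (Fin n → ℝ))
    (hΓ : ∀ x w, omegaL n L x (Γ x) w = fderiv ℝ (energyL n L) x w) :
    ∀ x, (Γ x).1 = x.2 :=
  aux_sode n L hL hreg Γ hΓ
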